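/- Let X = {1,…,n} and let T ∈ 𝒯_n be such that Γ(T) ≤ Γ(T') for all T' ∈ 𝒯_n. For some k ≥ 0 let X₁, X₂, X₃, X₄, Y₁,…,Y_k partition X such that: (i) X_i|(X−X_i) ∈ Σ(T) for all i ∈ {1,…,4}; (ii) Y_i|(X−Y_i) ∈ Σ(T) for all i ∈ {1,…,k}; and (iii) A_i|(X−A_i) ∈ Σ(T) for all i ∈ {0,…,k}, where A₀ = X₁∪X₂ and A_i = A_{i−1}∪Y_i. Writing x_i = |X_i|, either max(x₁,x₂) ≤ min(x₃,x₄) or max(x₃,x₄) ≤ min(x₁,x₂); that is, after relabelling X₁,…,X₄ compatibly with conditions (i)–(iii), one has x₁ ≤ x₂ ≤ x₃ ≤ x₄. -/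

import Mathlib

/-!
Formalization framework for unrooted binary phylogenetic trees on the
leaf set `Fin n`, encoded via their split systems (Buneman's
splits-equivalence theorem: a binary phylogenetic tree is uniquely
determined by its set of splits, which is a maximal pairwise-compatible
collection of proper bipartitions of the leaf set containing all
trivial splits).  A split `A | Aᶜ` is recorded by storing both of its
sides.
-/

/-- Two sides (subsets of leaves) are compatible: the corresponding
splits can coexist in a tree. -/
def SidesCompatible {n : ℕ} (A B : Finset (Fin n)) : Prop :=
  A ⊆ B ∨ B ⊆ A ∨ Disjoint A B ∨ A ∪ B = Finset.univ

/-- An unrooted binary phylogenetic tree on leaf set `Fin n`,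
represented by the set of sides of its splits. -/
structure PhyloTree (n : ℕ) where
  sides : Finset (Finset (Fin n))
  proper : ∀ A ∈ sides, A.Nonempty ∧ A ≠ Finset.univ
  compl_mem : ∀ A ∈ sides, Aᶜ ∈ sides
  singleton_mem : ∀ x : Fin n, {x} ∈ sides
  compatible : ∀ A ∈ sides, ∀ B ∈ sides, SidesCompatible A B
  maximal : ∀ A : Finset (Fin n), A.Nonempty → A ≠ Finset.univ →
    (∀ B ∈ sides, SidesCompatible A B) → A ∈ sides

namespace PhyloTree

variable {n : ℕ}

/-- The split system of the restricted tree `T|X`: two trees agree on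
`X` (i.e. `T|X = T'|X`) iff their restricted split systems agree. -/
def restrict (T : PhyloTree n) (X : Finset (Fin n)) : Finset (Finset (Fin n)) :=
  T.sides.image (· ∩ X)

/-- `Γ(T)`: the sum of `|A| * |B|` over all non-trivial splits `A|B` of
`T` (each unordered split is stored twice in `sides`, hence the
division by two, which is exact). -/
def gamma (T : PhyloTree n) : ℕ :=
  (∑ A ∈ T.sides.filter (fun A => 2 ≤ A.card ∧ 2 ≤ Aᶜ.card), A.card * Aᶜ.card) / 2

/-- A tree-rearrangement move: the deleted edge of `T` (recorded as the
unordered split it induces) together with the output tree. -/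
abbrev Move (n : ℕ) := Sym2 (Finset (Fin n)) × PhyloTree n

/-- The set of TBR operations on `T`: delete the edge inducing the
split `A | Aᶜ` and reconnect, obtaining a distinct tree `θ.2`.  The
defining property is that deleting the corresponding edges from `T`
and from `θ.2` yields the same forest, i.e. `A|Aᶜ` is a split of both
trees and the two restrictions agree. -/
def OTBR (T : PhyloTree n) : Set (Move n) :=
  { θ | θ.2 ≠ T ∧ ∃ A : Finset (Fin n),
      θ.1 = s(A, Aᶜ) ∧ A ∈ T.sides ∧ A ∈ θ.2.sides ∧
      T.restrict A = θ.2.restrict A ∧ T.restrict Aᶜ = θ.2.restrict Aᶜ }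

/-- SPR operations: TBR operations where one component `T|A` of the
bisection (the pruned subtree) is regrafted preserving its rooting,
i.e. `T|(A ∪ {x}) = θ(T)|(A ∪ {x})` for some (equivalently every) leaf
`x` of the other side. -/
def OSPR (T : PhyloTree n) : Set (Move n) :=
  { θ | θ ∈ T.OTBR ∧ ∃ A : Finset (Fin n), θ.1 = s(A, Aᶜ) ∧
      ∃ x ∈ Aᶜ, T.restrict (insert x A) = θ.2.restrict (insert x A) }

/-- The effect on sides of swapping the pendant subtrees `T|Y` and
`T|Z` (for disjoint clusters `Y`, `Z`). -/
def swapSide (Y Z A : Finset (Fin n)) : Finset (Fin n) :=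
  if Y ⊆ A ∧ Disjoint Z A then (A \ Y) ∪ Z
  else if Z ⊆ A ∧ Disjoint Y A then (A \ Z) ∪ Y
  else A

/-- NNI operations: SPR operations in which the pruned subtree `T|Y` is
swapped with a pendant subtree `T|Z` for some cluster `Z ≠ Y` of `T`. -/
def ONNI (T : PhyloTree n) : Set (Move n) :=
  { θ | θ ∈ T.OTBR ∧ ∃ Y Z : Finset (Fin n),
      θ.1 = s(Y, Yᶜ) ∧
      (∃ x ∈ Yᶜ, T.restrict (insert x Y) = θ.2.restrict (insert x Y)) ∧
      Z ∈ T.sides ∧ Z ≠ Y ∧ Disjoint Y Z ∧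
      θ.2.sides = T.sides.image (swapSide Y Z) }

/-- The TBR neighbourhood `N_TBR(T) = {θ(T) : θ ∈ O_TBR(T)}`. -/
def NTBR (T : PhyloTree n) : Set (PhyloTree n) := Prod.snd '' T.OTBR

/-- The SPR neighbourhood. -/
def NSPR (T : PhyloTree n) : Set (PhyloTree n) := Prod.snd '' T.OSPR

/-- The NNI neighbourhood. -/
def NNNI (T : PhyloTree n) : Set (PhyloTree n) := Prod.snd '' T.ONNI

/-- A caterpillar: every internal vertex (equivalently, every
tripartition of the leaves into three clusters) is adjacent to a
leaf. -/
def IsCaterpillar (T : PhyloTree n) : Prop :=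
  ∀ A B C : Finset (Fin n), A ∈ T.sides → B ∈ T.sides → C ∈ T.sides →
    Disjoint A B → Disjoint A C → Disjoint B C → A ∪ B ∪ C = Finset.univ →
    (A.card = 1 ∨ B.card = 1 ∨ C.card = 1)

/-- A complete (maximally balanced) tree. -/
def IsComplete (T : PhyloTree n) : Prop :=
  ∃ k : ℕ, 3 * 2 ^ k ≤ n ∧ n < 3 * 2 ^ (k + 1) ∧
    (∃ Y ∈ T.sides, Y.card = 2 ^ (k + 1)) ∧
    ∀ Y ∈ T.sides, 2 ≤ Y.card → Y.card ≤ 2 ^ (k + 1) →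
      ∃ Y₁ Y₂ : Finset (Fin n), Y₁ ∈ T.sides ∧ Y₂ ∈ T.sides ∧
        Disjoint Y₁ Y₂ ∧ Y₁ ∪ Y₂ = Y ∧
        ∃ j : ℕ, Y₁.card = 2 ^ j ∧ 2 ^ (j - 1) ≤ Y₂.card ∧ Y₂.card < 2 ^ (j + 1)

/-- The pendant subtree on the cluster `S` is perfectly balanced:
every cluster inside `S` with at least two leaves splits into two
equal-sized child clusters. -/
def PerfOn (T : PhyloTree n) (S : Finset (Fin n)) : Prop :=
  ∀ Y ∈ T.sides, Y ⊆ S → 2 ≤ Y.card →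
    ∃ Y₁ Y₂ : Finset (Fin n), Y₁ ∈ T.sides ∧ Y₂ ∈ T.sides ∧
      Disjoint Y₁ Y₂ ∧ Y₁ ∪ Y₂ = Y ∧ Y₁.card = Y₂.card

/-- A perfect tree: either `n = 2^k` and `T` is two perfectly balanced
rooted trees with `2^(k-1)` leaves joined by an edge, or
`n = 3·2^(k-1)` and `T` is three perfectly balanced rooted trees with
`2^(k-1)` leaves attached to a common vertex. -/
def IsPerfect (T : PhyloTree n) : Prop :=
  (∃ k : ℕ, n = 2 ^ k ∧ ∃ A ∈ T.sides,
      A.card = 2 ^ (k - 1) ∧ T.PerfOn A ∧ T.PerfOn Aᶜ) ∨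
  (∃ k : ℕ, n = 3 * 2 ^ (k - 1) ∧ ∃ A B C : Finset (Fin n),
      A ∈ T.sides ∧ B ∈ T.sides ∧ C ∈ T.sides ∧
      Disjoint A B ∧ Disjoint A C ∧ Disjoint B C ∧
      A ∪ B ∪ C = Finset.univ ∧
      A.card = 2 ^ (k - 1) ∧ B.card = 2 ^ (k - 1) ∧ C.card = 2 ^ (k - 1) ∧
      T.PerfOn A ∧ T.PerfOn B ∧ T.PerfOn C)

end PhyloTree

/-!
Exchanging the pendant subtrees on `X a` and `X c` (`a ∈ {0, 1}`, `c ∈ {2, 3}`) changes exactly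
the splits on the path between them: the two end splits `X a | ·` and `X c | ·` trade places,
and every `Aᵢ` becomes `Aᵢ \ X a ∪ X c`. No other split moves, because a side containing `X a`
and avoiding `X c` is compatible with all the clusters `X j`, `Yᵢ`, `Aᵢ`, so it is a union of
blocks comparable with every `Aᵢ`, hence `X a`, `(X c)ᶜ` or some `Aᵢ`. With `d = |X c| - |X a|`,
`f m = m (n - m)` and `S = ∑ᵢ (n - 2 |Aᵢ|)`, the exchange changes `Γ` by
`∑ᵢ (f (|Aᵢ| + d) - f |Aᵢ|) = d S - (k + 1) d²`, so minimality forces `d S ≥ (k + 1) d²`.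
All four differences `d` therefore share the sign of `S`, which is the claimed ordering.
-/

open Finset

section Compatible

variable {n : ℕ} {A B C Y Z : Finset (Fin n)} {y z : Fin n}

theorem SidesCompatible.symm (h : SidesCompatible A B) : SidesCompatible B A := by
  unfold SidesCompatible at *
  rw [disjoint_comm, union_comm]
  tauto

theorem SidesCompatible.compl_left (h : SidesCompatible A B) : SidesCompatible Aᶜ B := by
  rcases h with h | h | h | h
  · refine .inr <| .inr <| .inr <| eq_univ_of_forall fun x => ?_
    simpa [or_iff_not_imp_left] using @h x
  · exact .inr <| .inr <| .inl <| disjoint_compl_left_iff.2 h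
  · exact .inr <| .inl <| le_compl_iff_disjoint_left.2 h
  · exact .inl <| codisjoint_iff_compl_le_right.1 (codisjoint_iff.2 h)

@[simp]
theorem sidesCompatible_compl_left : SidesCompatible Aᶜ B ↔ SidesCompatible A B :=
  ⟨fun h => compl_compl A ▸ h.compl_left, .compl_left⟩

@[simp]
theorem sidesCompatible_compl_right : SidesCompatible A Bᶜ ↔ SidesCompatible A B :=
  ⟨fun h => (sidesCompatible_compl_left.1 h.symm).symm, fun h => h.symm.compl_left.symm⟩

theorem SidesCompatible.subset_or_subset_of_mem (h : SidesCompatible B C)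
    (hyB : y ∈ B) (hyC : y ∈ C) (hzB : z ∉ B) (hzC : z ∉ C) : B ⊆ C ∨ C ⊆ B := by
  rcases h with h | h | h | h
  · exact .inl h
  · exact .inr h
  · exact absurd hyC (disjoint_left.1 h hyB)
  · exact absurd (h ▸ mem_univ z) (by simp [hzB, hzC])

theorem SidesCompatible.subset_or_disjoint_of_mem (h : SidesCompatible C B)
    (hyB : y ∈ B) (hyC : y ∉ C) (hzB : z ∉ B) (hzC : z ∉ C) : C ⊆ B ∨ Disjoint C B := by
  rcases h with h | h | h | h
  · exact .inl h
  · exact absurd (h hyB) hyC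
  · exact .inr h
  · exact absurd (h ▸ mem_univ z) (by simp [hzB, hzC])

theorem SidesCompatible.sdiff_union (h : SidesCompatible B C)
    (hyB : y ∈ B) (hyC : y ∈ C) (hzB : z ∉ B) (hzC : z ∉ C) :
    SidesCompatible (B \ Y ∪ Z) (C \ Y ∪ Z) := by
  rcases h.subset_or_subset_of_mem hyB hyC hzB hzC with h | h
  · exact .inl <| union_subset_union (sdiff_subset_sdiff h subset_rfl) subset_rfl
  · exact .inr <| .inl <| union_subset_union (sdiff_subset_sdiff h subset_rfl) subset_rfl

end Compatible

section Chain

variable {α : Type*} [DecidableEq α]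

theorem monotone_of_succ_eq_union {k : ℕ} {A : Fin (k + 1) → Finset α} {Y : Fin k → Finset α}
    (hstep : ∀ i, A i.succ = A i.castSucc ∪ Y i) : Monotone A :=
  Fin.monotone_iff_le_succ.2 fun i => (hstep i).symm ▸ subset_union_left

theorem last_eq_union_biUnion :
    ∀ {k : ℕ} {A : Fin (k + 1) → Finset α} {Y : Fin k → Finset α},
    (∀ i, A i.succ = A i.castSucc ∪ Y i) → A (Fin.last k) = A 0 ∪ univ.biUnion Y
  | 0, _, _, _ => by simp
  | k + 1, A, Y, hstep => by
    rw [← Fin.succ_last, hstep, last_eq_union_biUnion (A := fun i => A i.castSucc)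
      (Y := fun i => Y i.castSucc) fun i => by rw [← Fin.succ_castSucc]; exact hstep _]
    ext x
    simp [Fin.exists_fin_succ']

theorem last_eq_compl_of_cover [Fintype α] {k : ℕ} {A : Fin (k + 1) → Finset α}
    {Y : Fin k → Finset α} {D : Finset α} (hstep : ∀ i, A i.succ = A i.castSucc ∪ Y i)
    (hA : Disjoint (A 0) D) (hY : ∀ i, Disjoint (Y i) D)
    (hcover : A 0 ∪ D ∪ univ.biUnion Y = univ) : A (Fin.last k) = Dᶜ := by
  rw [last_eq_union_biUnion hstep, eq_compl_iff_isCompl]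
  refine ⟨disjoint_union_left.2 ⟨hA, (disjoint_biUnion_left _ _ _).2 fun i _ => hY i⟩,
    codisjoint_iff.2 ?_⟩
  rw [top_eq_univ, ← hcover, sup_eq_union, union_right_comm]

theorem exists_eq_of_chain :
    ∀ {k : ℕ} {A : Fin (k + 1) → Finset α} {Y : Fin k → Finset α} {B : Finset α},
    (∀ i, A i.succ = A i.castSucc ∪ Y i) → A 0 ⊆ B → B ⊆ A (Fin.last k) →
    (∀ i, Y i ⊆ B ∨ Disjoint (Y i) B) → (∀ i, A i ⊆ B ∨ B ⊆ A i) → ∃ i, B = A i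
  | 0, _, _, _, _, h0, hlast, _, _ => ⟨0, subset_antisymm hlast h0⟩
  | k + 1, A, Y, B, hstep, h0, hlast, hY, hA => by
    have hlast_eq : A (Fin.last (k + 1)) = A (Fin.last k).castSucc ∪ Y (Fin.last k) := by
      rw [← hstep, Fin.succ_last]
    rcases hA (Fin.last k).castSucc with h | h
    · rcases hY (Fin.last k) with hy | hy
      · exact ⟨_, subset_antisymm hlast (hlast_eq ▸ union_subset h hy)⟩
      · rw [hlast_eq] at hlast
        exact ⟨_, subset_antisymm (Disjoint.left_le_of_le_sup_right hlast hy.symm) h⟩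
    · obtain ⟨i, hi⟩ := exists_eq_of_chain (A := fun i => A i.castSucc)
        (Y := fun i => Y i.castSucc) (fun i => by rw [← Fin.succ_castSucc]; exact hstep _)
        h0 h (fun i => hY _) (fun i => hA _)
      exact ⟨_, hi⟩

end Chain

theorem sum_shift_mul_sub {ι : Type*} (s : Finset ι) (b : ι → ℤ) (m d : ℤ) :
    ∑ i ∈ s, ((b i + d) * (m - (b i + d)) - b i * (m - b i)) =
      d * ∑ i ∈ s, (m - 2 * b i) - #s * d ^ 2 := by
  rw [mul_sum, card_eq_sum_ones, Nat.cast_sum, sum_mul, ← sum_sub_distrib]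
  exact sum_congr rfl fun i _ => by push_cast; ring

namespace PhyloTree

section SwapSide

variable {n : ℕ} {B C Y Z : Finset (Fin n)}

theorem swapSide_of_left (hY : Y ⊆ B) (hZ : Disjoint Z B) : swapSide Y Z B = B \ Y ∪ Z :=
  if_pos ⟨hY, hZ⟩

theorem swapSide_of_right (hYne : Y.Nonempty) (hZ : Z ⊆ B) (hY : Disjoint Y B) :
    swapSide Y Z B = B \ Z ∪ Y := by
  have : ¬Y ⊆ B := fun h => hYne.ne_empty (hY.eq_bot_of_le h)
  simp [swapSide, this, hZ, hY]

theorem swapSide_of_not (h₁ : ¬(Y ⊆ B ∧ Disjoint Z B)) (h₂ : ¬(Z ⊆ B ∧ Disjoint Y B)) :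
    swapSide Y Z B = B := by
  simp only [swapSide, if_neg h₁, if_neg h₂]

theorem subset_compl_and_disjoint_compl_iff :
    Y ⊆ Bᶜ ∧ Disjoint Z Bᶜ ↔ Z ⊆ B ∧ Disjoint Y B := by
  rw [subset_compl_iff_disjoint_right, disjoint_compl_right_iff, and_comm]

theorem compl_sdiff_union (hYB : Y ⊆ B) (hZB : Disjoint Z B) (hYZ : Disjoint Y Z) :
    (B \ Y ∪ Z)ᶜ = Bᶜ \ Z ∪ Y := by
  ext x
  have := @hYB x
  have := hZB.notMem_of_mem_left_finset (a := x)
  have := hYZ.notMem_of_mem_left_finset (a := x)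
  simp only [mem_union, mem_sdiff, mem_compl]
  tauto

theorem sdiff_union_sdiff_union (hYB : Y ⊆ B) (hZB : Disjoint Z B) :
    (B \ Y ∪ Z) \ Z ∪ Y = B := by
  ext x
  have := @hYB x
  have := hZB.notMem_of_mem_left_finset (a := x)
  simp only [mem_union, mem_sdiff]
  tauto

theorem swapSide_compl (hY : Y.Nonempty) (hYZ : Disjoint Y Z) :
    swapSide Y Z Bᶜ = (swapSide Y Z B)ᶜ := by
  by_cases h₁ : Y ⊆ B ∧ Disjoint Z B
  · obtain ⟨hZB, hYB⟩ := subset_compl_and_disjoint_compl_iff.2 h₁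
    rw [swapSide_of_left h₁.1 h₁.2, swapSide_of_right hY hZB hYB, compl_sdiff_union h₁.1 h₁.2 hYZ]
  by_cases h₂ : Z ⊆ B ∧ Disjoint Y B
  · obtain ⟨hYB, hZB⟩ := subset_compl_and_disjoint_compl_iff.2 h₂
    rw [swapSide_of_right hY h₂.1 h₂.2, swapSide_of_left hYB hZB,
      compl_sdiff_union h₂.1 h₂.2 hYZ.symm]
  rw [swapSide_of_not h₁ h₂, swapSide_of_not (by rwa [subset_compl_and_disjoint_compl_iff])
    (by rwa [subset_compl_and_disjoint_compl_iff])]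

theorem swapSide_swapSide (hY : Y.Nonempty) (hYZ : Disjoint Y Z) :
    swapSide Y Z (swapSide Y Z B) = B := by
  by_cases h₁ : Y ⊆ B ∧ Disjoint Z B
  · rw [swapSide_of_left h₁.1 h₁.2, swapSide_of_right hY subset_union_right
      (disjoint_union_right.2 ⟨disjoint_sdiff, hYZ⟩), sdiff_union_sdiff_union h₁.1 h₁.2]
  by_cases h₂ : Z ⊆ B ∧ Disjoint Y B
  · rw [swapSide_of_right hY h₂.1 h₂.2, swapSide_of_left subset_union_right
      (disjoint_union_right.2 ⟨disjoint_sdiff, hYZ.symm⟩), sdiff_union_sdiff_union h₂.1 h₂.2]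
  rw [swapSide_of_not h₁ h₂, swapSide_of_not h₁ h₂]

theorem swapSide_self_left (hYZ : Disjoint Y Z) : swapSide Y Z Y = Z := by
  simp [swapSide_of_left subset_rfl hYZ.symm]

theorem swapSide_self_right (hY : Y.Nonempty) (hYZ : Disjoint Y Z) : swapSide Y Z Z = Y := by
  simp [swapSide_of_right hY subset_rfl hYZ]

theorem swapSide_nonempty (hY : Y.Nonempty) (hZ : Z.Nonempty) (hB : B.Nonempty) :
    (swapSide Y Z B).Nonempty := by
  unfold swapSide
  split_ifs
  · exact hZ.mono subset_union_right
  · exact hY.mono subset_union_right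
  · exact hB

theorem swapSide_ne_univ (hY : Y.Nonempty) (hZ : Z.Nonempty) (hYZ : Disjoint Y Z)
    (hB : B ≠ univ) : swapSide Y Z B ≠ univ := by
  intro h
  have := swapSide_nonempty hY hZ (nonempty_iff_ne_empty.2 <| (compl_eq_empty_iff B).not.2 hB)
  rw [swapSide_compl hY hYZ, h, compl_univ] at this
  exact not_nonempty_empty this

theorem mem_image_swapSide (hY : Y.Nonempty) (hYZ : Disjoint Y Z) {s : Finset (Finset (Fin n))} :
    B ∈ s.image (swapSide Y Z) ↔ swapSide Y Z B ∈ s := by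
  refine ⟨fun h => ?_, fun h => mem_image.2 ⟨_, h, swapSide_swapSide hY hYZ⟩⟩
  obtain ⟨C, hC, rfl⟩ := mem_image.1 h
  rwa [swapSide_swapSide hY hYZ]

theorem sidesCompatible_sdiff_union_of_fixed (hY : Y.Nonempty) (hZ : Z.Nonempty)
    (hYZ : Disjoint Y Z) (hYB : Y ⊆ B) (hZB : Disjoint Z B)
    (hC₁ : ¬(Y ⊆ C ∧ Disjoint Z C)) (hC₂ : ¬(Z ⊆ C ∧ Disjoint Y C))
    (hCY : SidesCompatible C Y) (hCZ : SidesCompatible C Z) (hBC : SidesCompatible B C) :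
    SidesCompatible (B \ Y ∪ Z) C := by
  obtain ⟨y, hy⟩ := hY
  obtain ⟨z, hz⟩ := hZ
  -- the cases `Y ⊆ C` and `C ∪ Y = univ` reduce to these two by passing to `Cᶜ`
  have key : ∀ C, (C ⊆ Y ∨ Disjoint C Y) → ¬(Z ⊆ C ∧ Disjoint Y C) →
      SidesCompatible C Z → SidesCompatible B C → SidesCompatible (B \ Y ∪ Z) C := by
    intro C hCY hC hCZ hBC
    rcases hCY with hCY | hCY
    · exact .inr <| .inr <| .inl <|
        disjoint_union_left.2 ⟨sdiff_disjoint.mono_right hCY, hYZ.symm.mono_right hCY⟩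
    have hyC := hCY.notMem_of_mem_right_finset hy
    rcases hCZ with hCZ | hCZ | hCZ | hCZ
    · exact .inr <| .inl <| hCZ.trans subset_union_right
    · exact absurd ⟨hCZ, hCY.symm⟩ hC
    · rcases hBC.symm.subset_or_disjoint_of_mem (hYB hy) hyC (hZB.notMem_of_mem_left_finset hz)
        (hCZ.notMem_of_mem_right_finset hz) with h | h
      · exact .inr <| .inl fun x hx =>
          mem_union_left _ (mem_sdiff.2 ⟨h hx, hCY.notMem_of_mem_left_finset hx⟩)
      · exact .inr <| .inr <| .inl <|
          disjoint_union_left.2 ⟨h.symm.mono_left sdiff_subset, hCZ.symm⟩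
    · exact absurd (hCZ ▸ mem_univ y) (by simp [hyC, hYZ.notMem_of_mem_left_finset hy])
  have hCc : ¬(Z ⊆ Cᶜ ∧ Disjoint Y Cᶜ) := by rwa [subset_compl_and_disjoint_compl_iff]
  rcases hCY with hCY | hCY | hCY | hCY
  · exact key C (.inl hCY) hC₂ hCZ hBC
  · exact sidesCompatible_compl_right.1 <| key _ (.inr <| disjoint_compl_left_iff.2 hCY) hCc
      (sidesCompatible_compl_left.2 hCZ) (sidesCompatible_compl_right.2 hBC)
  · exact key C (.inr hCY) hC₂ hCZ hBC
  · exact sidesCompatible_compl_right.1 <|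
      key _ (.inl <| codisjoint_iff_compl_le_right.1 (codisjoint_iff.2 hCY)) hCc
      (sidesCompatible_compl_left.2 hCZ) (sidesCompatible_compl_right.2 hBC)

theorem sidesCompatible_swapSide_of_left (hY : Y.Nonempty) (hZ : Z.Nonempty)
    (hYZ : Disjoint Y Z) (hYB : Y ⊆ B) (hZB : Disjoint Z B)
    (hCY : SidesCompatible C Y) (hCZ : SidesCompatible C Z) (hBC : SidesCompatible B C) :
    SidesCompatible (swapSide Y Z B) (swapSide Y Z C) := by
  obtain ⟨y, hy⟩ := hY
  obtain ⟨z, hz⟩ := hZ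
  have hzB := hZB.notMem_of_mem_left_finset hz
  rw [swapSide_of_left hYB hZB]
  by_cases hC₁ : Y ⊆ C ∧ Disjoint Z C
  · rw [swapSide_of_left hC₁.1 hC₁.2]
    exact hBC.sdiff_union (hYB hy) (hC₁.1 hy) hzB (hC₁.2.notMem_of_mem_left_finset hz)
  by_cases hC₂ : Z ⊆ C ∧ Disjoint Y C
  · obtain ⟨hYC, hZC⟩ := subset_compl_and_disjoint_compl_iff.2 hC₂
    rw [← compl_compl C, swapSide_compl ⟨y, hy⟩ hYZ, sidesCompatible_compl_right,
      swapSide_of_left hYC hZC]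
    exact (sidesCompatible_compl_right.2 hBC).sdiff_union (hYB hy) (hYC hy) hzB
      (hZC.notMem_of_mem_left_finset hz)
  rw [swapSide_of_not hC₁ hC₂]
  exact sidesCompatible_sdiff_union_of_fixed ⟨y, hy⟩ ⟨z, hz⟩ hYZ hYB hZB hC₁ hC₂ hCY hCZ hBC

theorem sidesCompatible_swapSide (hY : Y.Nonempty) (hZ : Z.Nonempty) (hYZ : Disjoint Y Z)
    (hBY : SidesCompatible B Y) (hBZ : SidesCompatible B Z)
    (hCY : SidesCompatible C Y) (hCZ : SidesCompatible C Z) (hBC : SidesCompatible B C) :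
    SidesCompatible (swapSide Y Z B) (swapSide Y Z C) := by
  have of_moved : ∀ B C, SidesCompatible C Y → SidesCompatible C Z → SidesCompatible B C →
      (Y ⊆ B ∧ Disjoint Z B) ∨ (Z ⊆ B ∧ Disjoint Y B) →
      SidesCompatible (swapSide Y Z B) (swapSide Y Z C) := by
    rintro B C hCY hCZ hBC (hB | hB)
    · exact sidesCompatible_swapSide_of_left hY hZ hYZ hB.1 hB.2 hCY hCZ hBC
    · obtain ⟨hYB, hZB⟩ := subset_compl_and_disjoint_compl_iff.2 hB
      have := sidesCompatible_swapSide_of_left hY hZ hYZ hYB hZB hCY hCZ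
        (sidesCompatible_compl_left.2 hBC)
      rwa [swapSide_compl hY hYZ, sidesCompatible_compl_left] at this
  by_cases hB : (Y ⊆ B ∧ Disjoint Z B) ∨ (Z ⊆ B ∧ Disjoint Y B)
  · exact of_moved B C hCY hCZ hBC hB
  by_cases hC : (Y ⊆ C ∧ Disjoint Z C) ∨ (Z ⊆ C ∧ Disjoint Y C)
  · exact (of_moved C B hBY hBZ hBC.symm hC).symm
  rw [swapSide_of_not (not_or.1 hB).1 (not_or.1 hB).2,
    swapSide_of_not (not_or.1 hC).1 (not_or.1 hC).2]
  exact hBC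

end SwapSide

section Swap

variable {n : ℕ} {B Y Z : Finset (Fin n)}

theorem compatible_image_swapSide (T : PhyloTree n) (hY : Y ∈ T.sides) (hZ : Z ∈ T.sides)
    (hYZ : Disjoint Y Z) : ∀ A ∈ T.sides.image (swapSide Y Z),
      ∀ B ∈ T.sides.image (swapSide Y Z), SidesCompatible A B := by
  simp only [mem_image]
  rintro _ ⟨B, hB, rfl⟩ _ ⟨C, hC, rfl⟩
  exact sidesCompatible_swapSide (T.proper Y hY).1 (T.proper Z hZ).1 hYZ
    (T.compatible B hB Y hY) (T.compatible B hB Z hZ) (T.compatible C hC Y hY)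
    (T.compatible C hC Z hZ) (T.compatible B hB C hC)

def swap (T : PhyloTree n) (hY : Y ∈ T.sides) (hZ : Z ∈ T.sides) (hYZ : Disjoint Y Z) :
    PhyloTree n :=
  have hYne := (T.proper Y hY).1
  have hZne := (T.proper Z hZ).1
  { sides := T.sides.image (swapSide Y Z)
    proper := by
      simp only [mem_image]
      rintro _ ⟨B, hB, rfl⟩
      exact ⟨swapSide_nonempty hYne hZne (T.proper B hB).1,
        swapSide_ne_univ hYne hZne hYZ (T.proper B hB).2⟩
    compl_mem := by
      intro A hA
      rw [mem_image_swapSide hYne hYZ] at hA ⊢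
      rw [swapSide_compl hYne hYZ]
      exact T.compl_mem _ hA
    singleton_mem := by
      intro x
      rw [mem_image_swapSide hYne hYZ]
      by_cases hxY : Y = {x}
      · rwa [← hxY, swapSide_self_left hYZ]
      by_cases hxZ : Z = {x}
      · rwa [← hxZ, swapSide_self_right hYne hYZ]
      rw [swapSide_of_not (fun h => hxY (hYne.subset_singleton_iff.1 h.1))
        (fun h => hxZ (hZne.subset_singleton_iff.1 h.1))]
      exact T.singleton_mem x
    compatible := compatible_image_swapSide T hY hZ hYZ
    maximal := by
      intro D hD₁ hD₂ hD
      have hYs : Y ∈ T.sides.image (swapSide Y Z) :=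
        (mem_image_swapSide hYne hYZ).2 (by rwa [swapSide_self_left hYZ])
      have hZs : Z ∈ T.sides.image (swapSide Y Z) :=
        (mem_image_swapSide hYne hYZ).2 (by rwa [swapSide_self_right hYne hYZ])
      rw [mem_image_swapSide hYne hYZ]
      refine T.maximal _ (swapSide_nonempty hYne hZne hD₁) (swapSide_ne_univ hYne hZne hYZ hD₂)
        fun B hB => ?_
      have hBs := mem_image_of_mem (swapSide Y Z) hB
      have := sidesCompatible_swapSide hYne hZne hYZ (hD Y hYs) (hD Z hZs)
        (compatible_image_swapSide T hY hZ hYZ _ hBs _ hYs)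
        (compatible_image_swapSide T hY hZ hYZ _ hBs _ hZs) (hD _ hBs)
      rwa [swapSide_swapSide hYne hYZ] at this }

end Swap

def splitWeight {n : ℕ} (B : Finset (Fin n)) : ℕ :=
  if 2 ≤ #B ∧ 2 ≤ #Bᶜ then #B * #Bᶜ else 0

section Gamma

variable {n : ℕ} {B Y Z : Finset (Fin n)}

theorem gamma_eq_sum_splitWeight (T : PhyloTree n) :
    T.gamma = (∑ B ∈ T.sides, splitWeight B) / 2 := by
  rw [gamma, sum_filter]
  rfl

theorem splitWeight_compl : splitWeight Bᶜ = splitWeight B := by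
  simp only [splitWeight, compl_compl, and_comm, mul_comm]

theorem splitWeight_eq {a b c d : Fin n} (ha : a ∈ B) (hb : b ∈ B) (hab : a ≠ b)
    (hc : c ∉ B) (hd : d ∉ B) (hcd : c ≠ d) : (splitWeight B : ℤ) = #B * (n - #B) := by
  have h₁ : 2 ≤ #B := one_lt_card.2 ⟨a, ha, b, hb, hab⟩
  have h₂ : 2 ≤ #Bᶜ := one_lt_card.2 ⟨c, mem_compl.2 hc, d, mem_compl.2 hd, hcd⟩
  have h₃ := card_le_univ B
  rw [Fintype.card_fin] at h₃
  rw [splitWeight, if_pos ⟨h₁, h₂⟩, card_compl, Fintype.card_fin]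
  push_cast [Nat.cast_sub h₃]
  ring

theorem sum_compl_sides (T : PhyloTree n) (f : Finset (Fin n) → ℤ) :
    ∑ B ∈ T.sides, f Bᶜ = ∑ B ∈ T.sides, f B :=
  sum_nbij' compl compl T.compl_mem T.compl_mem (fun B _ => compl_compl B)
    (fun B _ => compl_compl B) fun _ _ => rfl

theorem sum_splitWeight_swap (T : PhyloTree n) (hY : Y ∈ T.sides) (hZ : Z ∈ T.sides)
    (hYZ : Disjoint Y Z) :
    ∑ B ∈ (T.swap hY hZ hYZ).sides, (splitWeight B : ℤ) = ∑ B ∈ T.sides, (splitWeight B : ℤ) +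
      2 * ∑ B ∈ T.sides with Y ⊆ B ∧ Disjoint Z B,
        ((splitWeight (swapSide Y Z B) : ℤ) - splitWeight B) := by
  have hYne := (T.proper Y hY).1
  set δ : Finset (Fin n) → ℤ := fun B => splitWeight (swapSide Y Z B) - splitWeight B
  have hδ : ∀ B, δ Bᶜ = δ B := fun B => by
    simp only [δ, swapSide_compl hYne hYZ, splitWeight_compl]
  -- a side moved by the swap either contains `Y` and avoids `Z`, or its complement does
  have hsplit : ∀ B, δ B = (if Y ⊆ B ∧ Disjoint Z B then δ B else 0) +
      (if Y ⊆ Bᶜ ∧ Disjoint Z Bᶜ then δ Bᶜ else 0) := by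
    intro B
    by_cases h₁ : Y ⊆ B ∧ Disjoint Z B
    · have h₂ : ¬(Y ⊆ Bᶜ ∧ Disjoint Z Bᶜ) := fun h₂ =>
        hYne.ne_empty ((disjoint_compl_right.mono h₁.1 h₂.1).eq_bot_of_le le_rfl)
      simp [h₁, h₂]
    by_cases h₂ : Y ⊆ Bᶜ ∧ Disjoint Z Bᶜ
    · simp [h₁, h₂, hδ]
    have h₂' : ¬(Z ⊆ B ∧ Disjoint Y B) := by rwa [← subset_compl_and_disjoint_compl_iff]
    rw [if_neg h₁, if_neg h₂, add_zero]
    simp [δ, swapSide_of_not h₁ h₂']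
  calc ∑ B ∈ (T.swap hY hZ hYZ).sides, (splitWeight B : ℤ)
      = ∑ B ∈ T.sides, (splitWeight B + δ B) := by
        refine (sum_image fun B _ C _ h => ?_).trans (sum_congr rfl fun B _ => by ring)
        simpa [swapSide_swapSide hYne hYZ] using congrArg (swapSide Y Z) h
    _ = _ := by
        rw [sum_add_distrib, sum_congr rfl fun B _ => hsplit B, sum_add_distrib,
          sum_compl_sides T fun B => if Y ⊆ B ∧ Disjoint Z B then δ B else 0, ← two_mul,
          sum_filter]

theorem sum_swap_nonneg_of_minimal (T : PhyloTree n)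
    (hmin : ∀ T' : PhyloTree n, T.gamma ≤ T'.gamma)
    (hY : Y ∈ T.sides) (hZ : Z ∈ T.sides) (hYZ : Disjoint Y Z) :
    0 ≤ ∑ B ∈ T.sides with Y ⊆ B ∧ Disjoint Z B,
      ((splitWeight (swapSide Y Z B) : ℤ) - splitWeight B) := by
  have h := hmin (T.swap hY hZ hYZ)
  have e := T.sum_splitWeight_swap hY hZ hYZ
  rw [gamma_eq_sum_splitWeight, gamma_eq_sum_splitWeight] at h
  rw [← Nat.cast_sum, ← Nat.cast_sum] at e
  omega

end Gamma

/-- The splits of `T` on the path between the pendant subtrees `P` and `Q`: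
`P ⊂ A₀ ⊂ ⋯ ⊂ A_k ⊂ Qᶜ`, each step adding one cluster (`W`, then the `Yᵢ`, then `V`). -/
structure PathLayout {n k : ℕ} (T : PhyloTree n) (P W Q V : Finset (Fin n))
    (A : Fin (k + 1) → Finset (Fin n)) (Y : Fin k → Finset (Fin n)) : Prop where
  P_mem : P ∈ T.sides
  W_mem : W ∈ T.sides
  Q_mem : Q ∈ T.sides
  V_mem : V ∈ T.sides
  A_mem : ∀ i, A i ∈ T.sides
  Y_mem : ∀ i, Y i ∈ T.sides
  A_zero : A 0 = P ∪ W
  A_succ : ∀ i, A i.succ = A i.castSucc ∪ Y i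
  A_last : A (Fin.last k) = (Q ∪ V)ᶜ
  disjoint_PW : Disjoint P W
  disjoint_QV : Disjoint Q V
  disjoint_Y : ∀ i, Disjoint (A 0) (Y i)

namespace PathLayout

variable {n k : ℕ} {T : PhyloTree n} {P W Q V B : Finset (Fin n)}
  {A : Fin (k + 1) → Finset (Fin n)} {Y : Fin k → Finset (Fin n)}

theorem swap_left (h : T.PathLayout P W Q V A Y) : T.PathLayout W P Q V A Y :=
  ⟨h.W_mem, h.P_mem, h.Q_mem, h.V_mem, h.A_mem, h.Y_mem, h.A_zero.trans (union_comm P W),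
    h.A_succ, h.A_last, h.disjoint_PW.symm, h.disjoint_QV, h.disjoint_Y⟩

theorem swap_right (h : T.PathLayout P W Q V A Y) : T.PathLayout P W V Q A Y :=
  ⟨h.P_mem, h.W_mem, h.V_mem, h.Q_mem, h.A_mem, h.Y_mem, h.A_zero, h.A_succ,
    h.A_last.trans (by rw [union_comm]), h.disjoint_PW, h.disjoint_QV.symm, h.disjoint_Y⟩

theorem subset_A (h : T.PathLayout P W Q V A Y) (i : Fin (k + 1)) : P ∪ W ⊆ A i :=
  h.A_zero ▸ monotone_of_succ_eq_union h.A_succ (Fin.zero_le i)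

theorem disjoint_A (h : T.PathLayout P W Q V A Y) (i : Fin (k + 1)) :
    Disjoint (A i) (Q ∪ V) :=
  le_compl_iff_disjoint_right.1 (h.A_last ▸ monotone_of_succ_eq_union h.A_succ (Fin.le_last i))

theorem disjoint_P_Q (h : T.PathLayout P W Q V A Y) : Disjoint P Q :=
  (h.disjoint_A 0).mono (subset_union_left.trans (h.subset_A 0)) subset_union_left

theorem eq_of_mem (h : T.PathLayout P W Q V A Y) (hB : B ∈ T.sides) (hPB : P ⊆ B)
    (hQB : Disjoint Q B) : B = P ∨ B = Qᶜ ∨ ∃ i, B = A i := by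
  obtain ⟨p, hp⟩ := (T.proper P h.P_mem).1
  obtain ⟨w, hw⟩ := (T.proper W h.W_mem).1
  obtain ⟨q, hq⟩ := (T.proper Q h.Q_mem).1
  obtain ⟨v, hv⟩ := (T.proper V h.V_mem).1
  have hqB := hQB.notMem_of_mem_left_finset hq
  have hpA (i) : p ∈ A i := h.subset_A i (mem_union_left _ hp)
  have hwA (i) : w ∈ A i := h.subset_A i (mem_union_right _ hw)
  have hqA (i) : q ∉ A i := (h.disjoint_A i).notMem_of_mem_right_finset (mem_union_left _ hq)
  have hvA (i) : v ∉ A i := (h.disjoint_A i).notMem_of_mem_right_finset (mem_union_right _ hv)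
  have block {S} (hS : S ∈ T.sides) (hpS : p ∉ S) (hqS : q ∉ S) : S ⊆ B ∨ Disjoint S B :=
    (T.compatible S hS B hB).subset_or_disjoint_of_mem (hPB hp) hpS hqB hqS
  have hcomp (i) : A i ⊆ B ∨ B ⊆ A i :=
    (T.compatible _ (h.A_mem i) B hB).subset_or_subset_of_mem (hpA i) (hPB hp) (hqA i) hqB
  have hpW : p ∉ W := h.disjoint_PW.notMem_of_mem_left_finset hp
  have hqW : q ∉ W := fun hqW => hqA 0 (h.subset_A 0 (mem_union_right _ hqW))
  have hpV : p ∉ V := fun hpV =>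
    (h.disjoint_A 0).notMem_of_mem_left_finset (hpA 0) (mem_union_right _ hpV)
  have hqV : q ∉ V := h.disjoint_QV.notMem_of_mem_left_finset hq
  rcases block h.W_mem hpW hqW with hWB | hWB
  · rcases block h.V_mem hpV hqV with hVB | hVB
    · have hAB : A (Fin.last k) ⊆ B := (hcomp _).resolve_right fun hBA => hvA _ (hBA (hVB hv))
      refine .inr <| .inl <| subset_antisymm (subset_compl_iff_disjoint_right.2 hQB.symm) ?_
      intro x hx
      by_cases hxV : x ∈ V
      · exact hVB hxV
      · exact hAB (by simp_all [h.A_last])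
    · refine .inr <| .inr <| exists_eq_of_chain h.A_succ (h.A_zero ▸ union_subset hPB hWB) ?_
        (fun i => block (h.Y_mem i) ((h.disjoint_Y i).notMem_of_mem_left_finset (hpA 0))
          fun hqY => hqA i.succ (by rw [h.A_succ]; exact mem_union_right _ hqY)) hcomp
      rw [h.A_last, subset_compl_iff_disjoint_right]
      exact disjoint_union_right.2 ⟨hQB.symm, hVB.symm⟩
  · have hBA : B ⊆ A 0 :=
      (hcomp 0).resolve_left fun hAB => hWB.notMem_of_mem_left_finset hw (hAB (hwA 0))
    rw [h.A_zero] at hBA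
    exact .inl <| subset_antisymm (Disjoint.left_le_of_le_sup_right hBA hWB.symm) hPB

theorem filter_eq (h : T.PathLayout P W Q V A Y) :
    T.sides.filter (fun B => P ⊆ B ∧ Disjoint Q B) = insert P (insert Qᶜ (univ.image A)) := by
  ext B
  simp only [mem_filter, mem_insert, mem_image, mem_univ, true_and]
  constructor
  · rintro ⟨hB, hPB, hQB⟩
    rcases h.eq_of_mem hB hPB hQB with rfl | rfl | ⟨i, rfl⟩
    exacts [.inl rfl, .inr (.inl rfl), .inr (.inr ⟨i, rfl⟩)]
  · rintro (rfl | rfl | ⟨i, rfl⟩)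
    · exact ⟨h.P_mem, subset_rfl, h.disjoint_P_Q.symm⟩
    · exact ⟨T.compl_mem _ h.Q_mem, subset_compl_iff_disjoint_right.2 h.disjoint_P_Q,
        disjoint_compl_right⟩
    · exact ⟨h.A_mem i, subset_union_left.trans (h.subset_A i),
        ((h.disjoint_A i).mono_right subset_union_left).symm⟩

theorem splitWeight_swapSide_sub (h : T.PathLayout P W Q V A Y) (i : Fin (k + 1)) :
    (splitWeight (swapSide P Q (A i)) : ℤ) - splitWeight (A i) =
      (#(A i) + (#Q - #P)) * (n - (#(A i) + (#Q - #P))) - #(A i) * (n - #(A i)) := by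
  obtain ⟨p, hp⟩ := (T.proper P h.P_mem).1
  obtain ⟨w, hw⟩ := (T.proper W h.W_mem).1
  obtain ⟨q, hq⟩ := (T.proper Q h.Q_mem).1
  obtain ⟨v, hv⟩ := (T.proper V h.V_mem).1
  have hPA := subset_union_left.trans (h.subset_A i)
  have hQA := (h.disjoint_A i).mono_right (subset_union_left : Q ⊆ Q ∪ V)
  have hwA := h.subset_A i (mem_union_right _ hw)
  have hvA := (h.disjoint_A i).notMem_of_mem_right_finset (mem_union_right _ hv)
  have hqA := hQA.notMem_of_mem_right_finset hq
  have hwP : w ∉ P := h.disjoint_PW.notMem_of_mem_right_finset hw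
  have hpQ : p ∉ Q := h.disjoint_P_Q.notMem_of_mem_left_finset hp
  have hvQ : v ∉ Q := h.disjoint_QV.notMem_of_mem_right_finset hv
  have hpw : p ≠ w := fun e => hwP (e ▸ hp)
  have hqv : q ≠ v := fun e => hvQ (e ▸ hq)
  have hpv : p ≠ v := fun e => hvA (e ▸ hPA hp)
  have hwq : w ≠ q := fun e => hqA (e ▸ hwA)
  have hcard : (#(A i \ P ∪ Q) : ℤ) = #(A i) + (#Q - #P) := by
    rw [card_union_of_disjoint (hQA.mono_left sdiff_subset), card_sdiff_of_subset hPA]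
    push_cast [card_le_card hPA]
    ring
  rw [swapSide_of_left hPA hQA.symm,
    splitWeight_eq (by simp [hwA, hwP]) (mem_union_right _ hq) hwq (by simp [hp, hpQ])
      (by simp [hvA, hvQ]) hpv,
    splitWeight_eq (hPA hp) hwA hpw hqA hvA hqv, hcard]

theorem card_le_card_of_minimal (h : T.PathLayout P W Q V A Y)
    (hmin : ∀ T' : PhyloTree n, T.gamma ≤ T'.gamma) :
    (0 ≤ ∑ B ∈ univ.image A, ((n : ℤ) - 2 * #B) → #P ≤ #Q) ∧
      (∑ B ∈ univ.image A, ((n : ℤ) - 2 * #B) ≤ 0 → #Q ≤ #P) := by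
  have hPne := (T.proper P h.P_mem).1
  obtain ⟨w, hw⟩ := (T.proper W h.W_mem).1
  obtain ⟨v, hv⟩ := (T.proper V h.V_mem).1
  have hvQ : v ∈ Qᶜ := mem_compl.2 (h.disjoint_QV.notMem_of_mem_right_finset hv)
  have hvA (i) : v ∉ A i := (h.disjoint_A i).notMem_of_mem_right_finset (mem_union_right _ hv)
  have hP : P ∉ insert Qᶜ (univ.image A) := by
    simp only [mem_insert, mem_image, mem_univ, true_and, not_or, not_exists]
    exact ⟨fun e => hvA 0 (h.subset_A 0 (mem_union_left _ (e ▸ hvQ))), fun i e =>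
      h.disjoint_PW.notMem_of_mem_right_finset hw (e ▸ h.subset_A i (mem_union_right _ hw))⟩
  have hQ : Qᶜ ∉ univ.image A := by
    simp only [mem_image, mem_univ, true_and, not_exists]
    exact fun i e => hvA i (e ▸ hvQ)
  have hsum : ∑ B ∈ univ.image A, ((splitWeight (swapSide P Q B) : ℤ) - splitWeight B) =
      ∑ B ∈ univ.image A,
        (((#B : ℤ) + (#Q - #P)) * (n - (#B + (#Q - #P))) - #B * (n - #B)) :=
    sum_congr rfl fun B hB => by
      obtain ⟨i, -, rfl⟩ := mem_image.1 hB
      exact h.splitWeight_swapSide_sub i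
  have key := T.sum_swap_nonneg_of_minimal hmin h.P_mem h.Q_mem h.disjoint_P_Q
  rw [h.filter_eq, sum_insert hP, sum_insert hQ, swapSide_self_left h.disjoint_P_Q,
    swapSide_compl hPne h.disjoint_P_Q, swapSide_self_right hPne h.disjoint_P_Q,
    splitWeight_compl, splitWeight_compl, hsum, sum_shift_mul_sub] at key
  have hM : (0 : ℤ) < #(univ.image A) := by exact_mod_cast card_pos.2 (univ_nonempty.image A)
  constructor <;> intro hS <;> zify <;> nlinarith

end PathLayout

end PhyloTree

theorem gamma_minimiser_sides_ordered_general (n k : ℕ) (T : PhyloTree n)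
    (hmin : ∀ T' : PhyloTree n, T.gamma ≤ T'.gamma)
    (X : Fin 4 → Finset (Fin n)) (Y : Fin k → Finset (Fin n))
    (A : Fin (k + 1) → Finset (Fin n))
    (hXdisj : ∀ i j, i ≠ j → Disjoint (X i) (X j))
    (hXYdisj : ∀ i j, Disjoint (X i) (Y j))
    (hcover : ((Finset.univ.biUnion X) ∪ (Finset.univ.biUnion Y)) = Finset.univ)
    (hX : ∀ i, X i ∈ T.sides)
    (hY : ∀ i, Y i ∈ T.sides)
    (hA0 : A 0 = X 0 ∪ X 1)
    (hAsucc : ∀ i : Fin k, A i.succ = A i.castSucc ∪ Y i)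
    (hA : ∀ i, A i ∈ T.sides) :
    max (X 0).card (X 1).card ≤ min (X 2).card (X 3).card ∨
      max (X 2).card (X 3).card ≤ min (X 0).card (X 1).card := by
  have hlast : A (Fin.last k) = (X 2 ∪ X 3)ᶜ := by
    refine last_eq_compl_of_cover hAsucc ?_
      (fun i => disjoint_union_right.2 ⟨(hXYdisj 2 i).symm, (hXYdisj 3 i).symm⟩) ?_
    · simp only [hA0, disjoint_union_left, disjoint_union_right]
      exact ⟨⟨hXdisj 0 2 (by decide), hXdisj 1 2 (by decide)⟩,
        hXdisj 0 3 (by decide), hXdisj 1 3 (by decide)⟩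
    · rw [← hcover, hA0, show (univ : Finset (Fin 4)) = {0, 1, 2, 3} from rfl]
      simp [union_assoc]
  have h₀₂ : T.PathLayout (X 0) (X 1) (X 2) (X 3) A Y :=
    ⟨hX 0, hX 1, hX 2, hX 3, hA, hY, hA0, hAsucc, hlast, hXdisj 0 1 (by decide),
      hXdisj 2 3 (by decide), fun i => hA0 ▸ disjoint_union_left.2 ⟨hXYdisj 0 i, hXYdisj 1 i⟩⟩
  have h₁₂ := h₀₂.swap_left
  obtain ⟨h02, h20⟩ := h₀₂.card_le_card_of_minimal hmin
  obtain ⟨h03, h30⟩ := h₀₂.swap_right.card_le_card_of_minimal hmin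
  obtain ⟨h12, h21⟩ := h₁₂.card_le_card_of_minimal hmin
  obtain ⟨h13, h31⟩ := h₁₂.swap_right.card_le_card_of_minimal hmin
  simp only [max_le_iff, le_min_iff]
  rcases le_total 0 (∑ B ∈ univ.image A, ((n : ℤ) - 2 * #B)) with hS | hS
  · exact .inl ⟨⟨h02 hS, h12 hS⟩, h03 hS, h13 hS⟩
  · exact .inr ⟨⟨h20 hS, h30 hS⟩, h21 hS, h31 hS⟩

/-- Lemma 9: let `T ∈ 𝒯_n` minimise `Γ` and let
`X₁,…,X₄,Y₁,…,Y_k` partition the leaf set with each `Xᵢ`, each `Yᵢ`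
and each `Aᵢ` (where `A₀ = X₁ ∪ X₂`, `Aᵢ = A_{i−1} ∪ Yᵢ`) a side of a
split of `T`.  Then with `xᵢ = |Xᵢ|`, either `max(x₁,x₂) ≤ min(x₃,x₄)`
or `max(x₃,x₄) ≤ min(x₁,x₂)`. -/
theorem gamma_minimiser_sides_ordered (n k : ℕ) (T : PhyloTree n)
    (hmin : ∀ T' : PhyloTree n, T.gamma ≤ T'.gamma)
    (X : Fin 4 → Finset (Fin n)) (Y : Fin k → Finset (Fin n))
    (A : Fin (k + 1) → Finset (Fin n))
    (hXdisj : ∀ i j, i ≠ j → Disjoint (X i) (X j))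
    (hYdisj : ∀ i j, i ≠ j → Disjoint (Y i) (Y j))
    (hXYdisj : ∀ i j, Disjoint (X i) (Y j))
    (hcover : ((Finset.univ.biUnion X) ∪ (Finset.univ.biUnion Y)) = Finset.univ)
    (hX : ∀ i, X i ∈ T.sides)
    (hY : ∀ i, Y i ∈ T.sides)
    (hA0 : A 0 = X 0 ∪ X 1)
    (hAsucc : ∀ i : Fin k, A i.succ = A i.castSucc ∪ Y i)
    (hA : ∀ i, A i ∈ T.sides) :
    max (X 0).card (X 1).card ≤ min (X 2).card (X 3).card ∨
      max (X 2).card (X 3).card ≤ min (X 0).card (X 1).card :=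
  gamma_minimiser_sides_ordered_general n k T hmin X Y A hXdisj hXYdisj hcover hX hY hA0 hAsucc hA
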